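/- arXiv:1510.02554 — 3 statements merged into one kernel-verified Lean document; each statement's English description precedes it below -/
import Mathlib

section
/- Let D be a Gauss code and x a chord of D such that one of the two open arcs into which the two endpoints of x divide the cyclic word contains no head endpoints. Then D can be transformed into the Gauss code obtained from D by deleting the chord x by a finite sequence of W moves followed by one C1 move; in particular, the two codes are welded-equivalent. -/
/-!
Gauss codes for welded knots.

A Gauss code is a cyclic word in which each chord label occurs exactly twice,
once as a tail (`isHead = false`) and once as a head (`isHead = true`), both
occurrences carrying the common sign of the chord.  We represent the cyclic
word by a linear list of entries, working up to rotation (`List.rotate`) and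
injective relabelling of the chords.
-/

/-- An endpoint of a chord: `(chord label, isHead, sign)`, where `isHead = false`
means a tail (over-passing) endpoint and `isHead = true` a head (under-passing)
endpoint, and the sign `true`/`false` stands for `+1`/`-1`. -/
abbrev GEntry : Type := ℕ × Bool × Bool

/-- A (linear representative of a cyclic) word of endpoints. -/
abbrev GWord : Type := List GEntry

/-- The set of chord labels occurring in a word. -/
def chordSet (w : GWord) : Set ℕ := {a | ∃ e ∈ w, e.1 = a}

/-- `w` is a Gauss code: every chord label that occurs in `w` occurs exactly
twice, once as a tail and once as a head, with a common sign. -/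
def IsGaussCode (w : GWord) : Prop :=
  ∀ a ∈ chordSet w,
    w.countP (fun e => e.1 == a) = 2 ∧
    ∃ s : Bool, (a, false, s) ∈ w ∧ (a, true, s) ∈ w

/-- The crossing change at the set `S` of chords: at every chord of `S`, the
tail and head markings of its two occurrences are exchanged and its sign is
reversed. -/
def crossingChange (S : Finset ℕ) (w : GWord) : GWord :=
  w.map fun e => if e.1 ∈ S then (e.1, !e.2.1, !e.2.2) else e

/-- Deletion of the chord `a` (both of its endpoints) from the word. -/
def deleteChord (a : ℕ) (w : GWord) : GWord :=
  w.filter fun e => e.1 != a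

/-- Equality of words up to cyclic permutation. -/
def RotEq (w w' : GWord) : Prop := ∃ n : ℕ, w' = w.rotate n

/-- Renaming the chords of a word by `f`. -/
def relabelWord (f : ℕ → ℕ) (w : GWord) : GWord := w.map fun e => (f e.1, e.2)

/-- Equality of words up to cyclic permutation and (injective) renaming of
the chords. -/
def CyclicRename (w w' : GWord) : Prop :=
  ∃ (n : ℕ) (f : ℕ → ℕ), Function.Injective f ∧ w' = relabelWord f (w.rotate n)

/-- Raw C1 move (deleting direction): deletion of a chord whose two endpoints
occupy adjacent positions; the inserting direction is the converse relation. -/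
def C1delRaw (u v : GWord) : Prop :=
  ∃ (x y : GWord) (a : ℕ) (h s : Bool),
    (∀ e ∈ x ++ y, e.1 ≠ a) ∧
    u = x ++ (a, h, s) :: (a, !h, s) :: y ∧
    v = x ++ y

/-- Raw W move: interchange of two adjacent endpoints that are both tails
(of any two chords, regardless of signs). -/
def WRaw (u v : GWord) : Prop :=
  ∃ (x y : GWord) (a b : ℕ) (s t : Bool),
    u = x ++ (a, false, s) :: (b, false, t) :: y ∧
    v = x ++ (b, false, t) :: (a, false, s) :: y

/-- Raw C2 move (deleting direction): deletion of a pair of chords of opposite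
signs whose two tails occupy adjacent positions and whose two heads occupy
adjacent positions. -/
def C2delRaw (u v : GWord) : Prop :=
  ∃ (x y z : GWord) (a b : ℕ) (s : Bool),
    a ≠ b ∧
    (∀ e ∈ x ++ y ++ z, e.1 ≠ a ∧ e.1 ≠ b) ∧
    (u = x ++ (a, false, s) :: (b, false, !s) :: (y ++ (a, true, s) :: (b, true, !s) :: z) ∨
     u = x ++ (a, false, s) :: (b, false, !s) :: (y ++ (b, true, !s) :: (a, true, s) :: z)) ∧
    v = x ++ y ++ z

/-- Raw C3 move: the Gauss-code translation of the planar Reidemeister move of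
type 3.  Three strands `A`, `B`, `C` (modelled on the lines `y = -1`, `y = x`,
`y = -x` and their directions `(1,0)`, `(1,1)`, `(-1,1)`, possibly reversed
according to `dA`, `dB`, `dC`) meet pairwise in the chords `a = AB`, `b = AC`,
`c = BC`; `oAB`, `oAC`, `oBC` record which strand passes over in each pair and
must come from a linear height order.  The six endpoints form three adjacent
pairs, one on each strand, and the move exchanges the order within each pair;
the head/tail pattern is determined by the heights and the signs by the heights
and the directions, as in a planar diagram. -/
def C3Raw (u v : GWord) : Prop :=
  ∃ (x y z t : GWord) (a b c : ℕ) (oAB oAC oBC dA dB dC swap : Bool),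
    a ≠ b ∧ a ≠ c ∧ b ≠ c ∧
    (oAB = oBC → oAC = oAB) ∧
    (let sa : Bool := (dA == dB) == oAB
     let sb : Bool := (dA == dC) == oAC
     let sc : Bool := (dB == dC) == oBC
     let PA : GWord :=
       if dA then [(a, !oAB, sa), (b, !oAC, sb)] else [(b, !oAC, sb), (a, !oAB, sa)]
     let PB : GWord :=
       if dB then [(a, oAB, sa), (c, !oBC, sc)] else [(c, !oBC, sc), (a, oAB, sa)]
     let PC : GWord :=
       if dC then [(b, oAC, sb), (c, oBC, sc)] else [(c, oBC, sc), (b, oAC, sb)]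
     let Q1 : GWord := if swap then PC else PB
     let Q2 : GWord := if swap then PB else PC
     u = x ++ PA ++ y ++ Q1 ++ z ++ Q2 ++ t ∧
     v = x ++ PA.reverse ++ y ++ Q1.reverse ++ z ++ Q2.reverse ++ t)

/-- One welded Reidemeister move (C1, C2, C3 or W, in either direction),
performed up to cyclic permutation and renaming of chords. -/
def WeldedStep (u v : GWord) : Prop :=
  ∃ u₀ v₀ : GWord, CyclicRename u u₀ ∧ CyclicRename v₀ v ∧
    (C1delRaw u₀ v₀ ∨ C1delRaw v₀ u₀ ∨ C2delRaw u₀ v₀ ∨ C2delRaw v₀ u₀ ∨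
     C3Raw u₀ v₀ ∨ C3Raw v₀ u₀ ∨ WRaw u₀ v₀)

/-- Welded equivalence: two Gauss codes are welded-equivalent if they are
related by a finite sequence of C1, C2, C3 and W moves (on cyclic words). -/
def WeldedEquiv : GWord → GWord → Prop := Relation.EqvGen WeldedStep

/-- A Gauss code represents the trivial welded knot iff it is
welded-equivalent to the empty code. -/
def RepresentsTrivial (w : GWord) : Prop := WeldedEquiv w []

/-- One C1 or W move (in either direction), up to cyclic permutation and
renaming of chords. -/
def CWStep (u v : GWord) : Prop :=
  ∃ u₀ v₀ : GWord, CyclicRename u u₀ ∧ CyclicRename v₀ v ∧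
    (C1delRaw u₀ v₀ ∨ C1delRaw v₀ u₀ ∨ WRaw u₀ v₀)

/-- Relatedness by a finite sequence of C1 and W moves alone. -/
def CWEquiv : GWord → GWord → Prop := Relation.EqvGen CWStep

/-- One W move, up to cyclic permutation. -/
def WStepRot (u v : GWord) : Prop :=
  ∃ u₀ v₀ : GWord, RotEq u u₀ ∧ RotEq v₀ v ∧ WRaw u₀ v₀

/-- One deleting C1 move, up to cyclic permutation. -/
def C1StepRot (u v : GWord) : Prop :=
  ∃ u₀ v₀ : GWord, RotEq u u₀ ∧ RotEq v₀ v ∧ C1delRaw u₀ v₀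

/-- In the linear word `v`, no chord has its head occurring strictly before
its tail. -/
def TailsFirst (v : GWord) : Prop :=
  ¬ ∃ (x y z : GWord) (a : ℕ) (s s' : Bool),
      v = x ++ (a, true, s) :: (y ++ (a, false, s') :: z)

/-- A Gauss code is descending if the cyclic word can be cut at some point and
read in one of the two directions so that every chord's tail occurs before its
head. -/
def IsDescending (w : GWord) : Prop :=
  ∃ n : ℕ, TailsFirst (w.rotate n) ∨ TailsFirst ((w.rotate n).reverse)

/-- `c(D)`: the minimal number of chords of a Gauss code representing the same
welded knot as `D`. -/
noncomputable def minCrossing (D : GWord) : ℕ :=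
  sInf {n : ℕ | ∃ D' : GWord, IsGaussCode D' ∧ WeldedEquiv D D' ∧ (chordSet D').ncard = n}

/-- `u(D)`: the minimal cardinality of a set `S` of chords of `D` such that the
crossing change at `S` turns `D` into a Gauss code representing the trivial
welded knot. -/
noncomputable def unknottingNumWord (D : GWord) : ℕ :=
  sInf {k : ℕ | ∃ S : Finset ℕ, ↑S ⊆ chordSet D ∧ S.card = k ∧
    WeldedEquiv (crossingChange S D) []}

/-- `u(K)`: the minimum of `u(D')` over all Gauss codes `D'` representing the
same welded knot as `D`. -/
noncomputable def unknottingNum (D : GWord) : ℕ :=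
  sInf {k : ℕ | ∃ D' : GWord, IsGaussCode D' ∧ WeldedEquiv D D' ∧ unknottingNumWord D' = k}

/-!
If the arc from one endpoint of `x` to the other contains only tails, the tail of `x` can be
carried across that arc by W moves (tails commute), until it sits next to the head of `x`; a
single C1 move then removes `x`.
-/

theorem List.IsRotated.filter {α : Type*} (p : α → Bool) {l l' : List α} (h : l ~r l') :
    l.filter p ~r l'.filter p := by
  obtain ⟨n, rfl⟩ := h
  rw [List.rotate_eq_drop_append_take_mod, List.filter_append]
  calc l.filter p
      = (l.take (n % l.length)).filter p ++ (l.drop (n % l.length)).filter p := by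
        rw [← List.filter_append, List.take_append_drop]
    _ ~r _ := List.isRotated_append

theorem rotEq_iff_isRotated {w w' : GWord} : RotEq w w' ↔ w ~r w' :=
  exists_congr fun _ => eq_comm

theorem RotEq.symm {u v : GWord} (h : RotEq u v) : RotEq v u :=
  rotEq_iff_isRotated.2 (rotEq_iff_isRotated.1 h).symm

theorem RotEq.trans {u v w : GWord} (h₁ : RotEq u v) (h₂ : RotEq v w) : RotEq u w :=
  rotEq_iff_isRotated.2 ((rotEq_iff_isRotated.1 h₁).trans (rotEq_iff_isRotated.1 h₂))

theorem RotEq.refl (w : GWord) : RotEq w w := ⟨0, (List.rotate_zero w).symm⟩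

theorem rotEq_rotate (w : GWord) (n : ℕ) : RotEq w (w.rotate n) := ⟨n, rfl⟩

theorem RotEq.deleteChord {w w' : GWord} (a : ℕ) (h : RotEq w w') :
    RotEq (deleteChord a w) (deleteChord a w') :=
  rotEq_iff_isRotated.2 ((rotEq_iff_isRotated.1 h).filter _)

theorem cyclicRename_of_rotEq {w w' : GWord} (h : RotEq w w') : CyclicRename w w' := by
  obtain ⟨n, rfl⟩ := h
  exact ⟨n, id, Function.injective_id, by simp [relabelWord]⟩

theorem WRaw.symm {u v : GWord} (h : WRaw u v) : WRaw v u := by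
  obtain ⟨x, y, a, b, s, t, rfl, rfl⟩ := h
  exact ⟨x, y, b, a, t, s, rfl, rfl⟩

theorem WStepRot.symm {u v : GWord} (h : WStepRot u v) : WStepRot v u := by
  obtain ⟨u₀, v₀, hu, hv, hw⟩ := h
  exact ⟨v₀, u₀, hv.symm, hu.symm, hw.symm⟩

instance : Std.Symm WStepRot := ⟨fun _ _ => WStepRot.symm⟩

theorem WStepRot.weldedStep {u v : GWord} (h : WStepRot u v) : WeldedStep u v := by
  obtain ⟨u₀, v₀, hu, hv, hw⟩ := h
  exact ⟨u₀, v₀, cyclicRename_of_rotEq hu, cyclicRename_of_rotEq hv, by simp [hw]⟩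

theorem C1StepRot.weldedStep {u v : GWord} (h : C1StepRot u v) : WeldedStep u v := by
  obtain ⟨u₀, v₀, hu, hv, hc⟩ := h
  exact ⟨u₀, v₀, cyclicRename_of_rotEq hu, cyclicRename_of_rotEq hv, Or.inl hc⟩

theorem C1StepRot.of_rotEq {u u' v v' : GWord} (hu : RotEq u' u) (h : C1StepRot u v)
    (hv : RotEq v v') : C1StepRot u' v' := by
  obtain ⟨u₀, v₀, hu₀, hv₀, hc⟩ := h
  exact ⟨u₀, v₀, hu.trans hu₀, hv₀.trans hv, hc⟩

theorem exists_reflTransGen_wStepRot_of_rotEq {w u v : GWord} (hw : RotEq w u)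
    (h : Relation.ReflTransGen WStepRot u v) :
    ∃ m, Relation.ReflTransGen WStepRot w m ∧ RotEq m v := by
  cases h.cases_head with
  | inl huv => exact ⟨w, .refl, huv ▸ hw⟩
  | inr hstep =>
    obtain ⟨u', ⟨u₀, v₀, hu₀, hv₀, hW⟩, hrest⟩ := hstep
    exact ⟨v, .head ⟨u₀, v₀, hw.trans hu₀, hv₀, hW⟩ hrest, RotEq.refl v⟩

theorem reflTransGen_wStepRot_move_tail (a : ℕ) (s : Bool) {arc : GWord}
    (harc : ∀ e ∈ arc, e.2.1 = false) (p q : GWord) :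
    Relation.ReflTransGen WStepRot (p ++ (a, false, s) :: (arc ++ q))
      (p ++ arc ++ (a, false, s) :: q) := by
  induction arc generalizing p with
  | nil => simp [Relation.ReflTransGen.refl]
  | cons e arc ih =>
    obtain ⟨b, hb, t⟩ := e
    obtain rfl : hb = false := harc _ List.mem_cons_self
    have hstep : WStepRot (p ++ (a, false, s) :: (b, false, t) :: (arc ++ q))
        ((p ++ [(b, false, t)]) ++ (a, false, s) :: (arc ++ q)) :=
      ⟨_, _, RotEq.refl _, RotEq.refl _, p, arc ++ q, a, b, s, t, rfl, by simp⟩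
    have hchain := ih (fun e he => harc e (List.mem_cons_of_mem _ he)) (p ++ [(b, false, t)])
    simp only [List.append_assoc, List.cons_append] at hstep hchain ⊢
    exact .head hstep hchain

theorem countP_chord_eq_two {w : GWord} (hw : IsGaussCode w) {e : GEntry} (he : e ∈ w) :
    w.countP (fun f => f.1 == e.1) = 2 :=
  (hw e.1 ⟨e, he, rfl⟩).1

theorem chord_ne_of_rotate_eq {D arc rest : GWord} (hD : IsGaussCode D) {n x : ℕ}
    {h h' s s' : Bool} (hrot : D.rotate n = (x, h, s) :: (arc ++ (x, h', s') :: rest)) :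
    ∀ e ∈ arc ++ rest, e.1 ≠ x := by
  have hcount : (D.rotate n).countP (fun f => f.1 == x) = 2 := by
    rw [(D.rotate_perm n).countP_eq]
    exact countP_chord_eq_two hD (e := (x, h, s)) (List.mem_rotate.1 (hrot ▸ List.mem_cons_self))
  simp only [hrot, List.countP_cons, List.countP_append, beq_self_eq_true, if_true] at hcount
  intro e he
  have hzero : (arc ++ rest).countP (fun f => f.1 == x) = 0 := by
    rw [List.countP_append]; omega
  simpa using List.countP_eq_zero.1 hzero e he

theorem deleteChord_cons_append_cons {arc rest : GWord} {x : ℕ} (h h' s s' : Bool)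
    (hfree : ∀ e ∈ arc ++ rest, e.1 ≠ x) :
    deleteChord x ((x, h, s) :: (arc ++ (x, h', s') :: rest)) = arc ++ rest := by
  rw [deleteChord, ← List.filter_eq_self.2 (fun e he => bne_iff_ne.2 (hfree e he))]
  simp [List.filter_append]

theorem exists_wChain_c1StepRot {arc rest : GWord} (x : ℕ) (h s : Bool)
    (htails : ∀ e ∈ arc, e.2.1 = false) (hfree : ∀ e ∈ arc ++ rest, e.1 ≠ x) :
    ∃ m, Relation.ReflTransGen WStepRot ((x, h, s) :: (arc ++ (x, !h, s) :: rest)) m ∧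
      C1StepRot m (arc ++ rest) := by
  cases h with
  | false =>
    refine ⟨arc ++ (x, false, s) :: (x, true, s) :: rest,
      by simpa using reflTransGen_wStepRot_move_tail x s htails [] ((x, true, s) :: rest), ?_⟩
    exact ⟨_, _, RotEq.refl _, RotEq.refl _, arc, rest, x, false, s, hfree, by simp, rfl⟩
  | true =>
    refine ⟨(x, true, s) :: (x, false, s) :: (arc ++ rest),
      by simpa using symm (reflTransGen_wStepRot_move_tail x s htails [(x, true, s)] rest), ?_⟩
    exact ⟨_, _, RotEq.refl _, RotEq.refl _, [], arc ++ rest, x, true, s, hfree, rfl, rfl⟩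

theorem delete_chord_by_W_and_C1_general (D : GWord) (hD : IsGaussCode D)
    (x : ℕ)
    (harc : ∃ (n : ℕ) (arc rest : GWord) (h s : Bool),
      D.rotate n = (x, h, s) :: (arc ++ (x, !h, s) :: rest) ∧
      ∀ e ∈ arc, e.2.1 = false) :
    (∃ m : GWord, Relation.ReflTransGen WStepRot D m ∧
      C1StepRot m (deleteChord x D)) ∧
    WeldedEquiv D (deleteChord x D) := by
  obtain ⟨n, arc, rest, h, s, hrot, htails⟩ := harc
  have hfree := chord_ne_of_rotate_eq hD hrot
  obtain ⟨m, hm, hc1⟩ := exists_wChain_c1StepRot x h s htails hfree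
  obtain ⟨m', hm', hmm'⟩ := exists_reflTransGen_wStepRot_of_rotEq (rotEq_rotate D n) (hrot ▸ hm)
  have hdel := ((rotEq_rotate D n).deleteChord x).symm
  rw [hrot, deleteChord_cons_append_cons h (!h) s s hfree] at hdel
  have hc1' : C1StepRot m' (deleteChord x D) := hc1.of_rotEq hmm' hdel
  refine ⟨⟨m', hm', hc1'⟩, .trans _ _ _ ?_ (.rel _ _ hc1'.weldedStep)⟩
  exact Relation.EqvGen.eqvGen_mono (fun _ _ => WStepRot.weldedStep) _ _
    (Relation.EqvGen.reflTransGen_le_eqvGen _ _ _ hm')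

/-- If one of the two open arcs into which the endpoints of a
chord `x` divide the cyclic word of a Gauss code `D` contains no head
endpoints, then `D` can be transformed into the code obtained by deleting the
chord `x` by a finite sequence of W moves followed by one C1 move; in
particular the two codes are welded-equivalent. -/
theorem delete_chord_by_W_and_C1 (D : GWord) (hD : IsGaussCode D)
    (x : ℕ) (hx : x ∈ chordSet D)
    (harc : ∃ (n : ℕ) (arc rest : GWord) (h s : Bool),
      D.rotate n = (x, h, s) :: (arc ++ (x, !h, s) :: rest) ∧
      ∀ e ∈ arc, e.2.1 = false) :
    (∃ m : GWord, Relation.ReflTransGen WStepRot D m ∧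
      C1StepRot m (deleteChord x D)) ∧
    WeldedEquiv D (deleteChord x D) :=
  delete_chord_by_W_and_C1_general D hD x harc
end

section
/- Let D be a descending Gauss code with at least one chord, cut and oriented so that every tail occurs before its head in the resulting linear word, and let x be the chord whose head occurs first among all head endpoints of this linear word. Then the open arc of the cyclic word running from the tail of x to the head of x contains no head endpoints, and the Gauss code obtained from D by deleting the chord x is again descending. -/
/-!
The first head `x` is preceded only by tails, and its own tail precedes it, so the arc from the tail
of `x` to its head consists of tails. Deleting a chord keeps a sublist of the word, and a violation
of tails-first order is witnessed by a two-letter sublist, so the uncut word stays tails-first.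
-/

theorem List.pair_sublist_iff {α : Type*} {a b : α} {l : List α} :
    List.Sublist [a, b] l ↔ ∃ x y z, l = x ++ a :: (y ++ b :: z) := by
  constructor
  · intro h
    obtain ⟨r₁, r₂, rfl, ha, hb⟩ := List.cons_sublist_iff.mp h
    obtain ⟨x, x', rfl⟩ := List.append_of_mem ha
    obtain ⟨y', z, rfl⟩ := List.append_of_mem (List.singleton_sublist.mp hb)
    exact ⟨x, x' ++ y', z, by simp⟩
  · rintro ⟨x, y, z, rfl⟩
    exact List.sublist_append_of_sublist_right <| List.cons_sublist_cons.mpr <|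
      List.sublist_append_of_sublist_right <| List.singleton_sublist.mpr List.mem_cons_self

theorem tailsFirst_iff_forall_not_sublist {v : GWord} :
    TailsFirst v ↔ ∀ (a : ℕ) (s s' : Bool), ¬ List.Sublist [(a, true, s), (a, false, s')] v := by
  simp only [TailsFirst, List.pair_sublist_iff]
  grind

theorem TailsFirst.of_sublist {u v : GWord} (h : List.Sublist u v) (hv : TailsFirst v) :
    TailsFirst u :=
  tailsFirst_iff_forall_not_sublist.mpr fun a s s' hu =>
    tailsFirst_iff_forall_not_sublist.mp hv a s s' (hu.trans h)

theorem TailsFirst.deleteChord {w : GWord} (hw : TailsFirst w) (a : ℕ) :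
    TailsFirst (deleteChord a w) :=
  hw.of_sublist List.filter_sublist

theorem TailsFirst.isDescending {w : GWord} (hw : TailsFirst w) : IsDescending w :=
  ⟨0, Or.inl (by rwa [List.rotate_zero])⟩

theorem TailsFirst.mem_left_of_mem_of_head {p q : GWord} {a : ℕ} {s s' : Bool}
    (hw : TailsFirst (p ++ (a, true, s) :: q)) (htail : (a, false, s') ∈ p ++ (a, true, s) :: q) :
    (a, false, s') ∈ p := by
  rcases List.mem_append.mp htail with hp | hq
  · exact hp
  · obtain ⟨q₁, q₂, rfl⟩ := List.append_of_mem (List.mem_of_ne_of_mem (by simp) hq)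
    exact absurd ⟨p, q₁, q₂, a, s, s', rfl⟩ hw

theorem IsGaussCode.exists_tail_mem {w : GWord} (hw : IsGaussCode w) {a : ℕ} {h s : Bool}
    (ha : (a, h, s) ∈ w) : ∃ s', (a, false, s') ∈ w := by
  obtain ⟨-, s', htail, -⟩ := hw a ⟨_, ha, rfl⟩
  exact ⟨s', htail⟩

/-- Let `D` be a descending Gauss code with at least one
chord, cut and oriented so that every tail occurs before its head in the
linear word `D`, and let `x` be the chord whose head occurs first among all
heads of `D` (so `D = p ++ (x, true, s) :: q` with no head in `p`).  Then the
open arc running from the tail of `x` to the head of `x` contains no head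
endpoints, and deleting the chord `x` again yields a descending code. -/
theorem first_head_arc_and_delete_descending (D : GWord) (hD : IsGaussCode D)
    (hdesc : TailsFirst D)
    (x : ℕ) (s : Bool) (p q : GWord)
    (hsplit : D = p ++ (x, true, s) :: q)
    (hfirst : ∀ e ∈ p, e.2.1 = false) :
    (∃ (p₁ p₂ : GWord) (s' : Bool),
        p = p₁ ++ (x, false, s') :: p₂ ∧ ∀ e ∈ p₂, e.2.1 = false) ∧
    IsDescending (deleteChord x D) := by
  subst hsplit
  refine ⟨?_, (hdesc.deleteChord x).isDescending⟩
  obtain ⟨s', htail⟩ := hD.exists_tail_mem (List.mem_append_right p List.mem_cons_self)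
  obtain ⟨p₁, p₂, rfl⟩ := List.append_of_mem (hdesc.mem_left_of_mem_of_head htail)
  exact ⟨p₁, p₂, s', rfl, fun e he => hfirst e (by simp [he])⟩
end

section
/- Every non-trivial welded knot K satisfies u(K) ≤ (c(K) − 1)/2. -/
/-!
Fix a base point on a Gauss code with `c` chords and let `H` be the set of chords whose first
endpoint after the base point is a head. Changing the crossings at `H` makes every chord
tail-first (a descending code), changing them at the complement makes every chord head-first
(an ascending code). Both kinds of code are trivial: the first head of a descending code (the
last head of an ascending one) is separated from its tail by tails only, so W moves bring the two
endpoints together and C1 deletes the chord. Hence `u ≤ min (|H|, c - |H|)`; when `2 |H| = c`,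
moving the base point past one endpoint changes `|H|` by exactly one, which gives `2 u < c`.
-/

open List

def chords (w : GWord) : Finset ℕ := (w.map Prod.fst).toFinset

theorem coe_chords (w : GWord) : (chords w : Set ℕ) = chordSet w := by
  ext a
  simp [chords, chordSet]

theorem chordSet_rotate (w : GWord) (n : ℕ) : chordSet (w.rotate n) = chordSet w := by
  ext a
  simp [chordSet, (rotate_perm w n).mem_iff]

theorem chordSet_crossingChange (S : Finset ℕ) (w : GWord) :
    chordSet (crossingChange S w) = chordSet w := by
  ext a
  simp only [chordSet, crossingChange, Set.mem_ofPred_eq, mem_map]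
  constructor
  · rintro ⟨_, ⟨e, he, rfl⟩, rfl⟩
    exact ⟨e, he, by split <;> rfl⟩
  · rintro ⟨e, he, rfl⟩
    exact ⟨_, ⟨e, he, rfl⟩, by split <;> rfl⟩

theorem isGaussCode_rotate {w : GWord} (hw : IsGaussCode w) (n : ℕ) :
    IsGaussCode (w.rotate n) := by
  intro a ha
  rw [chordSet_rotate] at ha
  obtain ⟨hc, s, ht, hh⟩ := hw a ha
  exact ⟨(rotate_perm w n).countP_eq _ ▸ hc, s, (rotate_perm w n).mem_iff.2 ht,
    (rotate_perm w n).mem_iff.2 hh⟩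

theorem isGaussCode_crossingChange (S : Finset ℕ) {w : GWord} (hw : IsGaussCode w) :
    IsGaussCode (crossingChange S w) := by
  intro a ha
  rw [chordSet_crossingChange] at ha
  obtain ⟨hc, s, ht, hh⟩ := hw a ha
  refine ⟨?_, ?_⟩
  · rw [crossingChange, countP_map, ← hc]
    exact countP_congr fun e _ => by simp only [Function.comp_apply]; split <;> rfl
  · by_cases haS : a ∈ S
    · exact ⟨!s, mem_map.2 ⟨_, hh, by simp [haS]⟩, mem_map.2 ⟨_, ht, by simp [haS]⟩⟩
    · exact ⟨s, mem_map.2 ⟨_, ht, by simp [haS]⟩, mem_map.2 ⟨_, hh, by simp [haS]⟩⟩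

theorem isGaussCode_deleteChord (a : ℕ) {w : GWord} (hw : IsGaussCode w) :
    IsGaussCode (deleteChord a w) := by
  rintro b ⟨e, he, rfl⟩
  obtain ⟨he, hea⟩ := mem_filter.1 he
  obtain ⟨hc, s, ht, hh⟩ := hw e.1 ⟨e, he, rfl⟩
  refine ⟨?_, s, mem_filter.2 ⟨ht, hea⟩, mem_filter.2 ⟨hh, hea⟩⟩
  rw [deleteChord, countP_filter, ← hc]
  refine countP_congr fun f _ => ?_
  by_cases hf : f.1 = e.1 <;> simp_all

theorem IsGaussCode.label_ne_of_split {X Y Z : GWord} {e e' : GEntry}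
    (hw : IsGaussCode (X ++ e :: (Y ++ e' :: Z))) (he : e'.1 = e.1) :
    ∀ f ∈ X ++ Y ++ Z, f.1 ≠ e.1 := by
  have h2 := (hw e.1 ⟨e, by simp, rfl⟩).1
  simp only [countP_append, countP_cons, he, beq_self_eq_true, if_true] at h2
  have free : ∀ L : GWord, L.countP (·.1 == e.1) = 0 → ∀ f ∈ L, f.1 ≠ e.1 :=
    fun L hL f hf hfe => countP_eq_zero.1 hL f hf (by simp [hfe])
  intro f hf
  simp only [mem_append] at hf
  rcases hf with (hf | hf) | hf
  exacts [free X (by omega) f hf, free Y (by omega) f hf, free Z (by omega) f hf]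

theorem IsGaussCode.eq_of_split {X Y Z : GWord} {e e' : GEntry}
    (hw : IsGaussCode (X ++ e :: (Y ++ e' :: Z))) (he : e'.1 = e.1) :
    e' = (e.1, !e.2.1, e.2.2) := by
  have free := hw.label_ne_of_split he
  obtain ⟨-, s, ht, hh⟩ := hw e.1 ⟨e, by simp, rfl⟩
  have only_two : ∀ f ∈ X ++ e :: (Y ++ e' :: Z), f.1 = e.1 → f = e ∨ f = e' := by
    intro f hf hfe
    simp only [mem_append, mem_cons] at hf
    rcases hf with hf | hf | hf | hf | hf
    · exact absurd hfe (free f (by simp [hf]))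
    · exact Or.inl hf
    · exact absurd hfe (free f (by simp [hf]))
    · exact Or.inr hf
    · exact absurd hfe (free f (by simp [hf]))
  obtain ⟨a, b, σ⟩ := e
  obtain ⟨a', b', σ'⟩ := e'
  simp only at he ⊢
  subst he
  rcases only_two _ ht rfl with h1 | h1 <;> rcases only_two _ hh rfl with h2 | h2 <;>
    simp_all

def firstIsHead (a : ℕ) (w : GWord) : Bool := (w.find? (·.1 == a)).any (·.2.1)

theorem firstIsHead_append_cons {X R : GWord} {e : GEntry} (hX : ∀ f ∈ X, f.1 ≠ e.1) :
    firstIsHead e.1 (X ++ e :: R) = e.2.1 := by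
  have hnone : X.find? (·.1 == e.1) = none := find?_eq_none.2 fun f hf => by simpa using hX f hf
  simp [firstIsHead, find?_append, hnone]

theorem IsGaussCode.firstIsHead_eq {X Y Z : GWord} {e e' : GEntry}
    (hw : IsGaussCode (X ++ e :: (Y ++ e' :: Z))) (he : e'.1 = e.1) :
    firstIsHead e.1 (X ++ e :: (Y ++ e' :: Z)) = e.2.1 :=
  firstIsHead_append_cons fun f hf => hw.label_ne_of_split he f (by simp [hf])

theorem firstIsHead_deleteChord {a b : ℕ} (hab : a ≠ b) (w : GWord) :
    firstIsHead a (deleteChord b w) = firstIsHead a w := by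
  unfold firstIsHead deleteChord
  rw [find?_filter]
  congr 2
  funext f
  by_cases hf : f.1 = a <;> simp_all

theorem firstIsHead_crossingChange (S : Finset ℕ) {w : GWord} {a : ℕ} (ha : a ∈ chordSet w) :
    firstIsHead a (crossingChange S w) = (firstIsHead a w ^^ decide (a ∈ S)) := by
  obtain ⟨f, hfind⟩ : ∃ f, w.find? (·.1 == a) = some f := by
    obtain ⟨e, he, rfl⟩ := ha
    exact Option.isSome_iff_exists.1 (find?_isSome.2 ⟨e, he, by simp⟩)
  have hfa : f.1 = a := by simpa using find?_some hfind
  have hlabel : ((·.1 == a) ∘ fun e : GEntry => if e.1 ∈ S then (e.1, !e.2.1, !e.2.2) else e) =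
      (·.1 == a) := by
    funext e; simp only [Function.comp_apply]; split <;> rfl
  unfold firstIsHead crossingChange
  rw [find?_map, hlabel, hfind]
  subst hfa
  by_cases hS : f.1 ∈ S <;> simp [hS]

theorem cyclicRename_refl (w : GWord) : CyclicRename w w :=
  ⟨0, id, Function.injective_id, by simp [relabelWord]⟩

theorem cyclicRename_rotate (w : GWord) (n : ℕ) : CyclicRename w (w.rotate n) :=
  ⟨n, id, Function.injective_id, by simp [relabelWord]⟩

theorem weldedEquiv_of_WRaw {u v : GWord} (h : WRaw u v) : WeldedEquiv u v :=
  .rel _ _ ⟨u, v, cyclicRename_refl u, cyclicRename_refl v, by tauto⟩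

theorem weldedEquiv_of_C1delRaw {u v : GWord} (h : C1delRaw u v) : WeldedEquiv u v :=
  .rel _ _ ⟨u, v, cyclicRename_refl u, cyclicRename_refl v, by tauto⟩

/-- Insert a fresh kink by C1 and delete it again: since a move may be followed by any
cyclic permutation, the round trip rotates the word. -/
theorem weldedEquiv_rotate (w : GWord) (n : ℕ) : WeldedEquiv w (w.rotate n) := by
  obtain ⟨a, ha⟩ := Infinite.exists_notMem_finset (chords w)
  have hfresh : ∀ e ∈ w ++ [], e.1 ≠ a := fun e he hea =>
    ha (mem_toFinset.2 (mem_map.2 ⟨e, by simpa using he, hea⟩))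
  have kink : C1delRaw (w ++ [(a, false, true), (a, true, true)]) w :=
    ⟨w, [], a, false, true, hfresh, by simp, by simp⟩
  exact .trans _ _ _
    (.rel _ _ ⟨w, _, cyclicRename_refl _, cyclicRename_refl _, Or.inr (Or.inl kink)⟩)
    (.rel _ _ ⟨_, w, cyclicRename_refl _, cyclicRename_rotate w n, Or.inl kink⟩)

theorem crossingChange_rotate (S : Finset ℕ) (w : GWord) (n : ℕ) :
    crossingChange S (w.rotate n) = (crossingChange S w).rotate n :=
  map_rotate _ _ _

theorem weldedEquiv_nil_of_rotate {w : GWord} {n : ℕ} (h : WeldedEquiv (w.rotate n) []) :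
    WeldedEquiv w [] :=
  .trans _ _ _ (weldedEquiv_rotate w n) h

theorem weldedEquiv_tail_across_tails {t : GEntry} (ht : t.2.1 = false) :
    ∀ (m X Y : GWord), (∀ f ∈ m, f.2.1 = false) →
      WeldedEquiv (X ++ t :: (m ++ Y)) (X ++ (m ++ t :: Y))
  | [], _, _, _ => .refl _
  | f :: m, X, Y, hm => by
    obtain ⟨a, b, s⟩ := t
    obtain ⟨c, d, σ⟩ := f
    obtain rfl : b = false := ht
    obtain rfl : d = false := hm _ mem_cons_self
    have swap : WRaw (X ++ (a, false, s) :: (c, false, σ) :: (m ++ Y))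
        (X ++ (c, false, σ) :: (a, false, s) :: (m ++ Y)) :=
      ⟨X, m ++ Y, a, c, s, σ, rfl, rfl⟩
    have rest := weldedEquiv_tail_across_tails (t := (a, false, s)) rfl m
      (X ++ [(c, false, σ)]) Y fun f hf => hm f (mem_cons_of_mem _ hf)
    simp only [append_assoc, singleton_append] at rest
    exact .trans _ _ _ (weldedEquiv_of_WRaw swap) rest

theorem deleteChord_split {X m Y : GWord} {e e' : GEntry}
    (hw : IsGaussCode (X ++ e :: (m ++ e' :: Y))) (he : e'.1 = e.1) :
    deleteChord e.1 (X ++ e :: (m ++ e' :: Y)) = X ++ (m ++ Y) := by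
  have free := hw.label_ne_of_split he
  have keep : ∀ L : GWord, (∀ f ∈ L, f.1 ≠ e.1) → L.filter (·.1 != e.1) = L :=
    fun L hL => filter_eq_self.2 fun f hf => by simpa using hL f hf
  simp only [deleteChord, filter_append, filter_cons, he, bne_self_eq_false,
    Bool.false_eq_true, if_false]
  rw [keep X fun f hf => free f (by simp [hf]), keep m fun f hf => free f (by simp [hf]),
    keep Y fun f hf => free f (by simp [hf])]

theorem weldedEquiv_deleteChord_of_tails_between {X m Y : GWord} {e e' : GEntry}
    (hw : IsGaussCode (X ++ e :: (m ++ e' :: Y))) (he : e'.1 = e.1)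
    (hm : ∀ f ∈ m, f.2.1 = false) :
    WeldedEquiv (X ++ e :: (m ++ e' :: Y)) (deleteChord e.1 (X ++ e :: (m ++ e' :: Y))) := by
  have free := hw.label_ne_of_split he
  rw [deleteChord_split hw he, hw.eq_of_split he]
  obtain ⟨a, b, s⟩ := e
  cases b with
  | false =>
    have kink : C1delRaw ((X ++ m) ++ (a, false, s) :: (a, true, s) :: Y) ((X ++ m) ++ Y) :=
      ⟨X ++ m, Y, a, false, s, fun f hf => free f (by simpa using hf), rfl, rfl⟩
    simp only [append_assoc] at kink
    exact .trans _ _ _ (weldedEquiv_tail_across_tails rfl m X _ hm)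
      (weldedEquiv_of_C1delRaw kink)
  | true =>
    have kink : C1delRaw (X ++ (a, true, s) :: (a, false, s) :: (m ++ Y)) (X ++ (m ++ Y)) :=
      ⟨X, m ++ Y, a, true, s, fun f hf => free f (by simpa using hf), rfl, rfl⟩
    have slide := weldedEquiv_tail_across_tails (t := (a, false, s)) rfl m
      (X ++ [(a, true, s)]) Y hm
    simp only [append_assoc, singleton_append] at slide
    exact .trans _ _ _ (.symm _ _ slide) (weldedEquiv_of_C1delRaw kink)

theorem exists_head_of_ne_nil {v : GWord} (hv : IsGaussCode v) (hne : v ≠ []) :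
    ∃ h ∈ v, h.2.1 = true := by
  obtain ⟨f, v', rfl⟩ := exists_cons_of_ne_nil hne
  obtain ⟨-, s, -, hh⟩ := hv f.1 ⟨f, mem_cons_self, rfl⟩
  exact ⟨_, hh, rfl⟩

theorem exists_tails_between_of_firstIsHead_false {v : GWord} (hv : IsGaussCode v)
    (hne : v ≠ []) (hc : ∀ a ∈ chordSet v, firstIsHead a v = false) :
    ∃ X e m e' Y, v = X ++ e :: (m ++ e' :: Y) ∧ e'.1 = e.1 ∧ ∀ f ∈ m, f.2.1 = false := by
  obtain ⟨h₀, hh₀, hh₀head⟩ := exists_head_of_ne_nil hv hne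
  obtain ⟨h, hfind⟩ := Option.isSome_iff_exists.1
    (find?_isSome (p := (·.2.1)).2 ⟨h₀, hh₀, hh₀head⟩)
  obtain ⟨hhead, X, Y, rfl, hX⟩ := find?_eq_some_iff_append.1 hfind
  have hXtails : ∀ f ∈ X, f.2.1 = false := fun f hf => by simpa using hX f hf
  obtain ⟨-, s, ht, -⟩ := hv h.1 ⟨h, by simp, rfl⟩
  rcases mem_append.1 ht with htX | htY
  · obtain ⟨X₁, X₂, rfl⟩ := append_of_mem htX
    exact ⟨X₁, (h.1, false, s), X₂, h, Y, by simp, rfl,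
      fun f hf => hXtails f (by simp [hf])⟩
  · rcases mem_cons.1 htY with hth | htY
    · exact absurd (congrArg (·.2.1) hth) (by simp [hhead])
    · obtain ⟨Y₁, Y₂, rfl⟩ := append_of_mem htY
      have hw : IsGaussCode (X ++ h :: (Y₁ ++ (h.1, false, s) :: Y₂)) := hv
      have := (hw.firstIsHead_eq rfl).symm.trans (hc h.1 ⟨h, by simp, rfl⟩)
      simp [hhead] at this

theorem exists_tails_between_of_firstIsHead_true {v : GWord} (hv : IsGaussCode v)
    (hne : v ≠ []) (hc : ∀ a ∈ chordSet v, firstIsHead a v = true) :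
    ∃ X e m e' Y, v = X ++ e :: (m ++ e' :: Y) ∧ e'.1 = e.1 ∧ ∀ f ∈ m, f.2.1 = false := by
  obtain ⟨h₀, hh₀, hh₀head⟩ := exists_head_of_ne_nil hv hne
  obtain ⟨h, hfind⟩ := Option.isSome_iff_exists.1
    (find?_isSome (p := (·.2.1)).2 ⟨h₀, mem_reverse.2 hh₀, hh₀head⟩)
  obtain ⟨hhead, A, B, hAB, hA⟩ := find?_eq_some_iff_append.1 hfind
  rw [← reverse_reverse v, hAB] at hv hc ⊢
  simp only [reverse_append, reverse_cons, append_assoc, singleton_append] at hv hc ⊢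
  have hAtails : ∀ f ∈ A.reverse, f.2.1 = false := fun f hf => by
    simpa using hA f (by simpa using hf)
  obtain ⟨-, s, ht, -⟩ := hv h.1 ⟨h, by simp, rfl⟩
  rcases mem_append.1 ht with htB | htA
  · obtain ⟨B₁, B₂, hB⟩ := append_of_mem htB
    rw [hB] at hv hc
    simp only [append_assoc, cons_append] at hv hc
    have := (hv.firstIsHead_eq (e := (h.1, false, s)) rfl).symm.trans
      (hc h.1 ⟨h, by simp, rfl⟩)
    simp at this
  · rcases mem_cons.1 htA with hth | htA
    · exact absurd (congrArg (·.2.1) hth) (by simp [hhead])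
    · obtain ⟨A₁, A₂, hA'⟩ := append_of_mem htA
      rw [hA'] at hAtails ⊢
      exact ⟨B.reverse, h, A₁, _, A₂, rfl, rfl, fun f hf => hAtails f (by simp [hf])⟩

theorem length_deleteChord_lt {a : ℕ} {w : GWord} (ha : a ∈ chordSet w) :
    (deleteChord a w).length < w.length := by
  obtain ⟨e, he, rfl⟩ := ha
  exact length_filter_lt_length_iff_exists.2 ⟨e, he, by simp⟩

theorem weldedEquiv_nil_of_firstIsHead_eq (c : Bool) (v : GWord) (hv : IsGaussCode v)
    (hc : ∀ a ∈ chordSet v, firstIsHead a v = c) : WeldedEquiv v [] := by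
  rcases eq_or_ne v [] with rfl | hne
  · exact .refl _
  obtain ⟨X, e, m, e', Y, rfl, he, hm⟩ : ∃ X e m e' Y,
      v = X ++ e :: (m ++ e' :: Y) ∧ e'.1 = e.1 ∧ ∀ f ∈ m, f.2.1 = false := by
    cases c
    exacts [exists_tails_between_of_firstIsHead_false hv hne hc,
      exists_tails_between_of_firstIsHead_true hv hne hc]
  have hmem : e.1 ∈ chordSet (X ++ e :: (m ++ e' :: Y)) := ⟨e, by simp, rfl⟩
  have := length_deleteChord_lt hmem
  refine .trans _ _ _ (weldedEquiv_deleteChord_of_tails_between hv he hm)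
    (weldedEquiv_nil_of_firstIsHead_eq c _ (isGaussCode_deleteChord _ hv) fun a ha => ?_)
  obtain ⟨f, hf, rfl⟩ := ha
  obtain ⟨hf, hfe⟩ := mem_filter.1 hf
  rw [firstIsHead_deleteChord (by simpa using hfe)]
  exact hc f.1 ⟨f, hf, rfl⟩
termination_by v.length

def chordsFirstHead (b : Bool) (w : GWord) : Finset ℕ :=
  (chords w).filter (firstIsHead · w = b)

theorem coe_chordsFirstHead_subset (b : Bool) (w : GWord) :
    ↑(chordsFirstHead b w) ⊆ chordSet w := by
  rw [← coe_chords]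
  exact Finset.coe_subset.2 (Finset.filter_subset _ _)

theorem card_chordsFirstHead_add (w : GWord) :
    (chordsFirstHead true w).card + (chordsFirstHead false w).card = (chordSet w).ncard := by
  rw [← coe_chords, Set.ncard_coe_finset, ← Finset.card_filter_add_card_filter_not
    (s := chords w) (firstIsHead · w = true)]
  simp [chordsFirstHead]

theorem weldedEquiv_crossingChange_chordsFirstHead {w : GWord} (hw : IsGaussCode w)
    (b : Bool) : WeldedEquiv (crossingChange (chordsFirstHead b w) w) [] := by
  refine weldedEquiv_nil_of_firstIsHead_eq (!b) _ (isGaussCode_crossingChange _ hw)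
    fun a ha => ?_
  rw [chordSet_crossingChange] at ha
  have ha' : a ∈ chords w := by rw [← Finset.mem_coe, coe_chords]; exact ha
  rw [firstIsHead_crossingChange _ ha]
  cases b <;> cases h : firstIsHead a w <;> simp [chordsFirstHead, ha', h]

theorem firstIsHead_rotate_one {e : GEntry} {w : GWord} (hw : IsGaussCode (e :: w))
    {a : ℕ} (ha : a ∈ chordSet (e :: w)) :
    firstIsHead a (w ++ [e]) = (firstIsHead a (e :: w) ^^ (a == e.1)) := by
  have first : firstIsHead e.1 (e :: w) = e.2.1 := firstIsHead_append_cons (X := []) (by simp)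
  by_cases hae : a = e.1
  · subst hae
    have hc := (hw e.1 ⟨e, mem_cons_self, rfl⟩).1
    rw [countP_cons, if_pos (by simp)] at hc
    obtain ⟨e', he', he'e⟩ := countP_pos_iff.1 (show 0 < w.countP (·.1 == e.1) by omega)
    obtain ⟨Y, Z, rfl⟩ := append_of_mem he'
    have hw' : IsGaussCode ([] ++ e :: (Y ++ e' :: Z)) := hw
    have he'1 : e'.1 = e.1 := by simpa using he'e
    have free := hw'.label_ne_of_split he'1
    have second : firstIsHead e'.1 (Y ++ e' :: (Z ++ [e])) = e'.2.1 :=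
      firstIsHead_append_cons fun f hf => he'1 ▸ free f (by simp [hf])
    rw [first]
    simp only [append_assoc, cons_append, beq_self_eq_true] at second ⊢
    rw [← he'1, second, hw'.eq_of_split he'1]
    simp
  · obtain ⟨f, hfind⟩ : ∃ f, w.find? (·.1 == a) = some f := by
      obtain ⟨g, hg, rfl⟩ := ha
      rcases mem_cons.1 hg with rfl | hg
      · exact absurd rfl hae
      · exact Option.isSome_iff_exists.1 (find?_isSome.2 ⟨g, hg, by simp⟩)
    have hfind' : (e :: w).find? (·.1 == a) = some f := by
      rw [find?_cons_of_neg (by simpa using Ne.symm hae), hfind]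
    have hne : (a == e.1) = false := by simpa using hae
    simp [firstIsHead, find?_append, hfind, hfind', hne]

theorem card_chordsFirstHead_rotate_one {e : GEntry} {w : GWord} (hw : IsGaussCode (e :: w)) :
    (chordsFirstHead true (w ++ [e])).card + 1 = (chordsFirstHead true (e :: w)).card ∨
      (chordsFirstHead true (e :: w)).card + 1 = (chordsFirstHead true (w ++ [e])).card := by
  have hchords : chords (w ++ [e]) = chords (e :: w) := by
    ext a; simp [chords]
  have he : e.1 ∈ chords (e :: w) := by simp [chords]
  have hmem : ∀ a ∈ chords (e :: w), a ∈ chordSet (e :: w) := fun a ha => by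
    rwa [← Finset.mem_coe, coe_chords] at ha
  simp only [chordsFirstHead, hchords, Finset.card_filter]
  rw [← Finset.add_sum_erase _ _ he, ← Finset.add_sum_erase _ _ he,
    Finset.sum_congr rfl fun a ha => by
      rw [firstIsHead_rotate_one hw (hmem a (Finset.mem_of_mem_erase ha)),
        show (a == e.1) = false by simpa using Finset.ne_of_mem_erase ha, Bool.xor_false],
    firstIsHead_rotate_one hw (hmem _ he)]
  cases firstIsHead e.1 (e :: w) <;> simp <;> omega

theorem exists_unknotting_set_lt_half {w : GWord} (hw : IsGaussCode w) (hne : w ≠ []) :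
    ∃ S : Finset ℕ, ↑S ⊆ chordSet w ∧ 2 * S.card < (chordSet w).ncard ∧
      WeldedEquiv (crossingChange S w) [] := by
  obtain ⟨e, w, rfl⟩ := exists_cons_of_ne_nil hne
  have hrot : (e :: w).rotate 1 = w ++ [e] := by simp [rotate_cons_succ]
  have hset : chordSet (w ++ [e]) = chordSet (e :: w) := hrot ▸ chordSet_rotate _ 1
  have unknot₀ (b : Bool) := weldedEquiv_crossingChange_chordsFirstHead hw b
  have unknot₁ (b : Bool) : WeldedEquiv (crossingChange (chordsFirstHead b (w ++ [e])) (e :: w))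
      [] := by
    refine weldedEquiv_nil_of_rotate (n := 1) ?_
    rw [← crossingChange_rotate, hrot]
    exact weldedEquiv_crossingChange_chordsFirstHead (hrot ▸ isGaussCode_rotate hw 1) b
  have sub₁ (b : Bool) := hset ▸ coe_chordsFirstHead_subset b (w ++ [e])
  have card₀ := card_chordsFirstHead_add (e :: w)
  have card₁ := card_chordsFirstHead_add (w ++ [e])
  have shift := card_chordsFirstHead_rotate_one hw
  rw [hset] at card₁
  have : 2 * (chordsFirstHead true (e :: w)).card < (chordSet (e :: w)).ncard ∨
      2 * (chordsFirstHead false (e :: w)).card < (chordSet (e :: w)).ncard ∨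
      2 * (chordsFirstHead true (w ++ [e])).card < (chordSet (e :: w)).ncard ∨
      2 * (chordsFirstHead false (w ++ [e])).card < (chordSet (e :: w)).ncard := by
    omega
  rcases this with h | h | h | h
  exacts [⟨_, coe_chordsFirstHead_subset _ _, h, unknot₀ true⟩,
    ⟨_, coe_chordsFirstHead_subset _ _, h, unknot₀ false⟩,
    ⟨_, sub₁ true, h, unknot₁ true⟩, ⟨_, sub₁ false, h, unknot₁ false⟩]

theorem exists_minCrossing_code (D : GWord) (hD : IsGaussCode D) :
    ∃ D' : GWord, IsGaussCode D' ∧ WeldedEquiv D D' ∧ (chordSet D').ncard = minCrossing D :=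
  Nat.sInf_mem (s := {n | ∃ D' : GWord, IsGaussCode D' ∧ WeldedEquiv D D' ∧
    (chordSet D').ncard = n}) ⟨_, D, hD, .refl _, rfl⟩

theorem unknottingNum_le_card {D D' : GWord} (hD' : IsGaussCode D') (hDD' : WeldedEquiv D D')
    {S : Finset ℕ} (hS : ↑S ⊆ chordSet D') (hSD' : WeldedEquiv (crossingChange S D') []) :
    unknottingNum D ≤ S.card :=
  calc unknottingNum D ≤ unknottingNumWord D' := Nat.sInf_le ⟨D', hD', hDD', rfl⟩
    _ ≤ S.card := Nat.sInf_le ⟨S, hS, rfl, hSD'⟩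

/-- Every non-trivial welded knot `K` satisfies
`u(K) ≤ (c(K) - 1) / 2`, where the welded knot is given by any Gauss code `D`
representing it. -/
theorem unknotting_le_half_crossing (D : GWord) (hD : IsGaussCode D)
    (hnt : ¬ WeldedEquiv D []) :
    (unknottingNum D : ℝ) ≤ ((minCrossing D : ℝ) - 1) / 2 := by
  obtain ⟨D', hD', hDD', hcard⟩ := exists_minCrossing_code D hD
  have hne : D' ≠ [] := by
    rintro rfl
    exact hnt hDD'
  obtain ⟨S, hS, hlt, hSD'⟩ := exists_unknotting_set_lt_half hD' hne
  have hu := unknottingNum_le_card hD' hDD' hS hSD'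
  rw [le_div_iff₀ two_pos, le_sub_iff_add_le]
  exact_mod_cast (by omega : unknottingNum D * 2 + 1 ≤ minCrossing D)
end
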